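/- Let X_n be random variables bounded below by 0, and suppose E[X_n] → γ̃ and for each n and ε > 0 define φ_n(ε) = P(X_n < γ̃ − ε) + ε. If X_n ≤ C almost surely and for n large E[X_n] ≥ γ̃ − ε, then P(X_n > γ̃ + √φ_n(ε)) ≤ 2ε·φ_n(ε)^{−1/2} + γ̃·φ_n(ε)^{1/2}. -/

import Mathlib

open MeasureTheory Filter

/-!
Split `Ω` into `{X > γ + √φ}`, `{X < γ - ε}` and the rest, and bound `X` from below by
`γ + √φ`, `0` and `γ - ε` there. Comparing expectations with `E[X] ≤ γ + ε` gives
`p √φ ≤ 2ε + γ (q + ε)` for `p = P(X > γ + √φ)` and `q = P(X < γ - ε)`, and `q + ε = φ`.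
-/

theorem integral_indicator_const₀ {Ω E : Type*} [MeasurableSpace Ω] [NormedAddCommGroup E]
    [NormedSpace ℝ E] [CompleteSpace E] {μ : Measure Ω} {s : Set Ω} (hs : NullMeasurableSet s μ)
    (e : E) : ∫ ω, s.indicator (fun _ => e) ω ∂μ = μ.real s • e := by
  rw [integral_indicator₀ hs, setIntegral_const]

theorem add_mul_measureReal_sub_le_integral {Ω : Type*} [MeasurableSpace Ω] {μ : Measure Ω}
    [IsProbabilityMeasure μ] {X : Ω → ℝ} (hX : Integrable X μ) (hX0 : 0 ≤ᵐ[μ] X) (a b : ℝ) :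
    a + μ.real {ω | b < X ω} * (b - a) - μ.real {ω | X ω < a} * a ≤ ∫ ω, X ω ∂μ := by
  set A := {ω | b < X ω}
  set C := {ω | X ω < a}
  have hA : NullMeasurableSet A μ := nullMeasurableSet_lt aemeasurable_const hX.aemeasurable
  have hC : NullMeasurableSet C μ := nullMeasurableSet_lt hX.aemeasurable aemeasurable_const
  have hint_A := (integrable_const (b - a)).indicator₀ hA
  have hint_C := (integrable_const a).indicator₀ hC
  have hint_aA : Integrable (fun ω => a + A.indicator (fun _ => b - a) ω) μ :=
    (integrable_const a).add hint_A
  -- The left side is `b` on `{b < X}`, at most `0` on `{X < a}`, and `a` elsewhere.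
  have hpointwise : ∀ ω, 0 ≤ X ω →
      a + A.indicator (fun _ => b - a) ω - C.indicator (fun _ => a) ω ≤ X ω := by
    intro ω h0
    by_cases hωA : ω ∈ A <;> by_cases hωC : ω ∈ C <;>
      simp_all [A, C, Set.indicator_of_mem, Set.indicator_of_notMem] <;> linarith
  calc a + μ.real A * (b - a) - μ.real C * a
      = ∫ ω, (a + A.indicator (fun _ => b - a) ω - C.indicator (fun _ => a) ω) ∂μ := by
        rw [integral_sub hint_aA hint_C,
          integral_add (integrable_const a) hint_A, integral_indicator_const₀ hA,
          integral_indicator_const₀ hC, integral_const, probReal_univ]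
        simp only [smul_eq_mul, one_mul]
    _ ≤ ∫ ω, X ω ∂μ :=
        integral_mono_ae (hint_aA.sub hint_C) hX (hX0.mono hpointwise)

theorem upper_tail_bound_from_expectation_general
    {Ω : Type*} [MeasurableSpace Ω] (μ : Measure Ω) [IsProbabilityMeasure μ]
    (X : Ω → ℝ) (hint : Integrable X μ)
    (C : ℝ) (hbd : ∀ᵐ ω ∂μ, 0 ≤ X ω ∧ X ω ≤ C)
    (γ ε φ : ℝ) (hγ : 0 < γ) (hε : 0 < ε)
    (hφ : φ = (μ {ω | X ω < γ - ε}).toReal + ε)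
    (hE2 : (∫ ω, X ω ∂μ) ≤ γ + ε) :
    (μ {ω | γ + Real.sqrt φ < X ω}).toReal ≤
      2 * ε / Real.sqrt φ + γ * Real.sqrt φ := by
  set s := Real.sqrt φ
  set p := μ.real {ω | γ + s < X ω}
  set q := μ.real {ω | X ω < γ - ε}
  have hp : 0 ≤ p := measureReal_nonneg
  have hq : 0 ≤ q := measureReal_nonneg
  have hs : 0 < s := Real.sqrt_pos.mpr (by rw [hφ]; positivity)
  have hss : s * s = q + ε := by rw [Real.mul_self_sqrt (by rw [hφ]; positivity), hφ]; rfl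
  have hlower := add_mul_measureReal_sub_le_integral hint (hbd.mono fun _ h => h.1) (γ - ε) (γ + s)
  have hps : p * s ≤ 2 * ε + γ * (s * s) := by
    nlinarith [mul_nonneg hp hε.le, mul_nonneg hq hε.le]
  calc p ≤ (2 * ε + γ * (s * s)) / s := (le_div_iff₀ hs).mpr hps
    _ = 2 * ε / s + γ * s := by field_simp

/-- Let `X` be a random variable with `0 ≤ X ≤ C` a.s., `γ̃ > 0`, `ε > 0`,
`φ = P(X < γ̃ - ε) + ε ≤ 1`, and `γ̃ - ε ≤ E[X] ≤ γ̃ + ε`.  Then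
`P(X > γ̃ + √φ) ≤ 2ε·φ^{-1/2} + γ̃·φ^{1/2}`. -/
theorem upper_tail_bound_from_expectation
    {Ω : Type*} [MeasurableSpace Ω] (μ : Measure Ω) [IsProbabilityMeasure μ]
    (X : Ω → ℝ) (hmeas : Measurable X) (hint : Integrable X μ)
    (C : ℝ) (hC : 0 < C) (hbd : ∀ᵐ ω ∂μ, 0 ≤ X ω ∧ X ω ≤ C)
    (γ ε φ : ℝ) (hγ : 0 < γ) (hε : 0 < ε)
    (hφ : φ = (μ {ω | X ω < γ - ε}).toReal + ε) (hφ1 : φ ≤ 1)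
    (hE1 : γ - ε ≤ ∫ ω, X ω ∂μ) (hE2 : (∫ ω, X ω ∂μ) ≤ γ + ε) :
    (μ {ω | γ + Real.sqrt φ < X ω}).toReal ≤
      2 * ε / Real.sqrt φ + γ * Real.sqrt φ :=
  upper_tail_bound_from_expectation_general μ X hint C hbd γ ε φ hγ hε hφ hE2
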